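/- arXiv:1509.03868 — 11 statements merged into one kernel-verified Lean document; each statement's English description precedes it below -/
import Mathlib

section
/- Let R ⊆ S be a ring extension of commutative rings and let I be an ideal of S that is contained in R (so I is a common ideal of R and S). Then the S-module of Kähler differentials Ω_{S/R} is isomorphic (as an S-module, via the surjection S → S/I) to Ω_{(S/I)/(R/I)}. -/
set_option maxHeartbeats 1000000
set_option synthInstance.maxHeartbeats 400000

section Aux
variable (R S : Type*) [CommRing R] [CommRing S] [Algebra R S]

lemma aux_smul_top_eq_bot (I : Ideal S) (hI : ∀ x ∈ I, x ∈ (algebraMap R S).range) :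
    I • (⊤ : Submodule S (Ω[S⁄R])) = ⊥ := by
  rw [eq_bot_iff]
  refine Submodule.smul_le.2 fun i hi m _ => ?_
  have hD : ∀ s : S, i • KaehlerDifferential.D R S s = 0 := by
    intro s
    have h1 : KaehlerDifferential.D R S i = 0 := by
      obtain ⟨r, rfl⟩ := hI i hi
      exact Derivation.map_algebraMap _ r
    have h2 : KaehlerDifferential.D R S (i * s) = 0 := by
      obtain ⟨r, hr⟩ := hI (i * s) (I.mul_mem_right s hi)
      rw [← hr]
      exact Derivation.map_algebraMap _ r
    have := (KaehlerDifferential.D R S).leibniz i s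
    rw [h2, h1, smul_zero, add_zero] at this
    exact this.symm
  have hm : m ∈ Submodule.span S (Set.range (KaehlerDifferential.D R S)) := by
    rw [KaehlerDifferential.span_range_derivation]; trivial
  refine Submodule.span_induction ?_ ?_ ?_ ?_ hm
  · rintro _ ⟨s, rfl⟩; simpa using hD s
  · simp
  · intro x y _ _ hx hy
    simpa [smul_add] using add_mem hx hy
  · intro s x _ hx
    simp only [Submodule.mem_bot] at hx ⊢
    rw [smul_comm, hx, smul_zero]

end Aux

section Aux2
variable (R S : Type*) [CommRing R] [CommRing S] [Algebra R S]

lemma aux_oneTmul_injective (I : Ideal S) (hI : ∀ x ∈ I, x ∈ (algebraMap R S).range) :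
    Function.Injective (fun x : Ω[S⁄R] => (1 : S ⧸ I) ⊗ₜ[S] x) := by
  have h := aux_smul_top_eq_bot R S I hI
  intro x y hxy
  have hx : TensorProduct.quotTensorEquivQuotSMul (Ω[S⁄R]) I ((Ideal.Quotient.mk I 1) ⊗ₜ[S] x)
      = TensorProduct.quotTensorEquivQuotSMul (Ω[S⁄R]) I ((Ideal.Quotient.mk I 1) ⊗ₜ[S] y) := by
    congr 1
  rw [TensorProduct.quotTensorEquivQuotSMul_mk_tmul,
    TensorProduct.quotTensorEquivQuotSMul_mk_tmul, one_smul, one_smul] at hx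
  have := Submodule.Quotient.eq (I • (⊤ : Submodule S (Ω[S⁄R]))) |>.mp hx
  rw [h] at this
  simpa [sub_eq_zero] using this

end Aux2



/-- Let `R ⊆ S` share an ideal `I` (an ideal of `S` contained in `R`). Then `Ω[S⁄R]`
is isomorphic, as an `S`-module (via `S → S/I`), to `Ω[(S/I)⁄(R/I)]`. -/
theorem kaehler_quotient_shared_ideal
    (R S : Type*) [CommRing R] [CommRing S] [Algebra R S]
    (hinj : Function.Injective (algebraMap R S))
    (I : Ideal S) (hI : ∀ x ∈ I, x ∈ (algebraMap R S).range) :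
    letI : Algebra (R ⧸ I.comap (algebraMap R S)) (S ⧸ I) :=
      (Ideal.quotientMap I (algebraMap R S) le_rfl).toAlgebra
    Nonempty ((Ω[S⁄R]) ≃ₗ[S]
      (RestrictScalars S (S ⧸ I) (Ω[(S ⧸ I)⁄(R ⧸ I.comap (algebraMap R S))]))) := by
  letI : Algebra (R ⧸ I.comap (algebraMap R S)) (S ⧸ I) :=
    (Ideal.quotientMap I (algebraMap R S) le_rfl).toAlgebra
  have halg : ∀ r : R, algebraMap (R ⧸ I.comap (algebraMap R S)) (S ⧸ I)
      (Ideal.Quotient.mk _ r) = Ideal.Quotient.mk I (algebraMap R S r) :=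
    fun r => Ideal.quotientMap_mk (H := le_rfl)
  haveI : IsScalarTower R (R ⧸ I.comap (algebraMap R S)) (S ⧸ I) := by
    refine IsScalarTower.of_algebraMap_eq fun r => ?_
    rw [IsScalarTower.algebraMap_apply R S (S ⧸ I), Ideal.Quotient.algebraMap_eq,
      Ideal.Quotient.algebraMap_eq, halg]
  haveI : SMulCommClass (R ⧸ I.comap (algebraMap R S)) S (S ⧸ I) := by
    constructor
    intro a b c
    rw [Algebra.smul_def, Algebra.smul_def, Algebra.smul_def, Algebra.smul_def, mul_left_comm]
  haveI : SMulCommClass R S (S ⧸ I) := by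
    constructor
    intro a b c
    rw [Algebra.smul_def, Algebra.smul_def, Algebra.smul_def, Algebra.smul_def, mul_left_comm]
  -- the two maps
  have hmk : Function.Surjective (algebraMap S (S ⧸ I)) := by
    rw [Ideal.Quotient.algebraMap_eq]
    exact Ideal.Quotient.mk_surjective
  let f1 : (Ω[S⁄R]) →ₗ[S] (Ω[(S ⧸ I)⁄R]) := KaehlerDifferential.map R R S (S ⧸ I)
  let f2 : (Ω[(S ⧸ I)⁄R]) →ₗ[S ⧸ I] (Ω[(S ⧸ I)⁄(R ⧸ I.comap (algebraMap R S))]) :=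
    KaehlerDifferential.map R (R ⧸ I.comap (algebraMap R S)) (S ⧸ I) (S ⧸ I)
  -- f2 is injective
  haveI hsub : Subsingleton (Ω[(R ⧸ I.comap (algebraMap R S))⁄R]) := by
    refine KaehlerDifferential.subsingleton_of_surjective R _ ?_
    rw [Ideal.Quotient.algebraMap_eq]
    exact Ideal.Quotient.mk_surjective
  have hexact2 := KaehlerDifferential.exact_mapBaseChange_map R (R ⧸ I.comap (algebraMap R S)) (S ⧸ I)
  have hf2inj : Function.Injective f2 := by
    rw [← LinearMap.ker_eq_bot]
    rw [LinearMap.exact_iff] at hexact2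
    rw [hexact2, eq_bot_iff]
    rintro _ ⟨w, rfl⟩
    rw [Subsingleton.elim w 0, map_zero]
    exact Submodule.zero_mem ⊥
  -- f1 is injective
  have hexact1 := KaehlerDifferential.exact_kerCotangentToTensor_mapBaseChange R S (S ⧸ I) hmk
  have hker0 : ∀ z, KaehlerDifferential.kerCotangentToTensor R S (S ⧸ I) z = 0 := by
    intro z
    obtain ⟨x, rfl⟩ := Ideal.toCotangent_surjective _ z
    rw [KaehlerDifferential.kerCotangentToTensor_toCotangent]
    have hxI : x.1 ∈ I := by
      have hx : Ideal.Quotient.mk I x.1 = 0 := x.2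
      rwa [Ideal.Quotient.eq_zero_iff_mem] at hx
    obtain ⟨r, hr⟩ := hI x.1 hxI
    rw [← hr, Derivation.map_algebraMap, TensorProduct.tmul_zero]
  have hbc_inj : Function.Injective (KaehlerDifferential.mapBaseChange R S (S ⧸ I)) := by
    intro x y hxy
    have hx0 : KaehlerDifferential.mapBaseChange R S (S ⧸ I) (x - y) = 0 := by
      rw [map_sub, hxy, sub_self]
    obtain ⟨z, hz⟩ := (hexact1 (x - y)).mp hx0
    rw [hker0] at hz
    rw [← sub_eq_zero, ← hz]
  have h1 : ∀ x : Ω[S⁄R], f1 x = KaehlerDifferential.mapBaseChange R S (S ⧸ I) (1 ⊗ₜ[S] x) := by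
    intro x
    rw [KaehlerDifferential.mapBaseChange_tmul, one_smul]
  have hf1inj : Function.Injective f1 := by
    intro x y hxy
    rw [h1, h1] at hxy
    exact aux_oneTmul_injective R S I hI (hbc_inj hxy)
  -- surjectivity
  have hf1surj : Function.Surjective f1 :=
    KaehlerDifferential.map_surjective_of_surjective R R S (S ⧸ I) hmk
  have hf2surj : Function.Surjective f2 :=
    KaehlerDifferential.map_surjective R (R ⧸ I.comap (algebraMap R S)) (S ⧸ I)
  -- compose
  let F : (Ω[S⁄R]) →ₗ[S] (Ω[(S ⧸ I)⁄(R ⧸ I.comap (algebraMap R S))]) :=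
    (f2.restrictScalars S).comp f1
  have hFbij : Function.Bijective F :=
    ⟨fun x y h => hf1inj (hf2inj h), fun z => by
      obtain ⟨w, hw⟩ := hf2surj z
      obtain ⟨x, hx⟩ := hf1surj w
      exact ⟨x, by simp [F, hx, hw]⟩⟩
  let e := LinearEquiv.ofBijective F hFbij
  let eRS : (Ω[(S ⧸ I)⁄(R ⧸ I.comap (algebraMap R S))]) ≃ₗ[S]
      RestrictScalars S (S ⧸ I) (Ω[(S ⧸ I)⁄(R ⧸ I.comap (algebraMap R S))]) :=
    AddEquiv.toLinearEquiv
      (RestrictScalars.addEquiv S (S ⧸ I) (Ω[(S ⧸ I)⁄(R ⧸ I.comap (algebraMap R S))])).symm (by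
      intro c x
      rw [RestrictScalars.smul_def]
      simp only [AddEquiv.apply_symm_apply]
      rw [algebraMap_smul])
  exact ⟨e.trans eRS⟩
end

section
/- Let R be a commutative ring and n ≥ 2. The diagonal extension R ⊆ R^n is seminormal (meaning: whenever b ∈ R^n satisfies b² and b³ both lie in the diagonal copy of R, then b lies in the diagonal copy of R) if and only if R is reduced. -/
/-- The diagonal extension `R ⊆ Rⁿ` (`n ≥ 2`) is seminormal iff `R` is reduced. -/
theorem diagonal_seminormal_iff_reduced
    (R : Type*) [CommRing R] [Nontrivial R] (n : ℕ) (hn : 2 ≤ n) :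
    (∀ b : Fin n → R, b ^ 2 ∈ (algebraMap R (Fin n → R)).range →
      b ^ 3 ∈ (algebraMap R (Fin n → R)).range → b ∈ (algebraMap R (Fin n → R)).range)
    ↔ IsReduced R := by
  constructor
  · intro h
    rw [isReduced_iff_pow_one_lt 2 one_lt_two]
    intro x hx
    have h3 : x ^ 3 = 0 := by
      have : x ^ 3 = x ^ 2 * x := by ring
      rw [this, hx, zero_mul]
    set b : Fin n → R := fun i => if (i : ℕ) = 0 then x else 0 with hb
    have hb2 : b ^ 2 ∈ (algebraMap R (Fin n → R)).range := by
      refine ⟨0, ?_⟩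
      funext i
      simp only [Pi.pow_apply, hb, map_zero, Pi.zero_apply]
      split <;> simp [hx]
    have hb3 : b ^ 3 ∈ (algebraMap R (Fin n → R)).range := by
      refine ⟨0, ?_⟩
      funext i
      simp only [Pi.pow_apply, hb, map_zero, Pi.zero_apply]
      split <;> simp [h3]
    obtain ⟨r, hr⟩ := h b hb2 hb3
    have h0 : r = x := by
      have := congrFun hr (⟨0, by omega⟩ : Fin n)
      simpa [hb, Fin.ext_iff] using this
    have h1 : r = 0 := by
      have := congrFun hr (⟨1, by omega⟩ : Fin n)
      simpa [hb, Fin.ext_iff] using this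
    rw [← h0, h1]
  · intro hred b hb2 hb3
    obtain ⟨r, hr⟩ := hb2
    obtain ⟨s, hs⟩ := hb3
    have hconst : ∀ i j : Fin n, b i = b j := by
      intro i j
      have hi2 : (b i) ^ 2 = r := (congrFun hr i).symm
      have hj2 : (b j) ^ 2 = r := (congrFun hr j).symm
      have hi3 : (b i) ^ 3 = s := (congrFun hs i).symm
      have hj3 : (b j) ^ 3 = s := (congrFun hs j).symm
      have hri : r * b i = s := by linear_combination hi3 - b i * hi2
      have hrj : r * b j = s := by linear_combination hj3 - b j * hj2
      have hd : (b i - b j) ^ 3 = 0 := by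
        linear_combination hi3 - hj3 - 3 * b j * hi2 + 3 * b i * hj2 + 3 * hri - 3 * hrj
      have := hred.1 (b i - b j) ⟨3, hd⟩
      exact sub_eq_zero.mp this
    refine ⟨b ⟨0, by omega⟩, ?_⟩
    funext i
    have h : (algebraMap R (Fin n → R)) (b ⟨0, by omega⟩) i = b ⟨0, by omega⟩ := rfl
    rw [h, hconst ⟨0, by omega⟩ i]
end

section
/- Let R ⊆ S be a ring extension, J an ideal of S, and I := J ∩ R. If the set [R,S] of intermediate R-subalgebras of S is finite, then the set [R/I, S/J] of intermediate (R/I)-subalgebras of S/J is finite. Moreover, every element of [R/I, S/J] is of the form T/J for some T ∈ [R,S] containing J. -/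
/-- If `R ⊆ S` has FIP, `J` is an ideal of `S` and `I := J ∩ R`, then `R/I ⊆ S/J` has FIP
and every intermediate algebra of `R/I ⊆ S/J` is of the form `T/J` with `T ∈ [R,S]`, `J ⊆ T`. -/
theorem fip_quotient
    (R S : Type*) [CommRing R] [CommRing S] [Algebra R S]
    (hinj : Function.Injective (algebraMap R S))
    (J : Ideal S) (hfin : Finite (Subalgebra R S)) :
    letI : Algebra (R ⧸ J.comap (algebraMap R S)) (S ⧸ J) :=
      (Ideal.quotientMap J (algebraMap R S) le_rfl).toAlgebra
    Finite (Subalgebra (R ⧸ J.comap (algebraMap R S)) (S ⧸ J)) ∧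
      ∀ T' : Subalgebra (R ⧸ J.comap (algebraMap R S)) (S ⧸ J),
        ∃ T : Subalgebra R S, (∀ j ∈ J, j ∈ T) ∧
          T'.toSubring = T.toSubring.map (Ideal.Quotient.mk J) := by
  have hsurj : Function.Surjective (Ideal.Quotient.mk J) := Ideal.Quotient.mk_surjective
  set I := J.comap (algebraMap R S) with hI
  letI inst : Algebra (R ⧸ I) (S ⧸ J) :=
    (Ideal.quotientMap J (algebraMap R S) le_rfl).toAlgebra
  let F : @Subalgebra (R ⧸ I) (S ⧸ J) _ _ inst → Subalgebra R S := fun T' =>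
    { (T'.toSubring.comap (Ideal.Quotient.mk J)) with
      algebraMap_mem' := fun r => by
        show Ideal.Quotient.mk J (algebraMap R S r) ∈ T'.toSubring
        have : Ideal.Quotient.mk J (algebraMap R S r)
            = Ideal.quotientMap J (algebraMap R S) le_rfl (Ideal.Quotient.mk I r) := by
          rw [Ideal.quotientMap_mk]
        rw [this]
        exact T'.algebraMap_mem _ }
  have hF : ∀ T', (F T').toSubring = T'.toSubring.comap (Ideal.Quotient.mk J) := fun _ => rfl
  have hinjF : Function.Injective F := by
    intro T₁ T₂ h
    have h' := congrArg Subalgebra.toSubring h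
    rw [hF, hF] at h'
    have := congrArg (Subring.map (Ideal.Quotient.mk J)) h'
    rw [Subring.map_comap_eq_self_of_surjective hsurj,
      Subring.map_comap_eq_self_of_surjective hsurj] at this
    exact Subalgebra.toSubring_injective this
  refine ⟨Finite.of_injective F hinjF, fun T' => ⟨F T', ?_, ?_⟩⟩
  · intro j hj
    show Ideal.Quotient.mk J j ∈ T'.toSubring
    rw [Ideal.Quotient.eq_zero_iff_mem.mpr hj]
    exact zero_mem _
  · rw [hF, Subring.map_comap_eq_self_of_surjective hsurj]
end

section
/- Let R be an Artinian commutative ring and R ⊆ S an unramified ring extension of finite type. Then for every prime ideal P of R, PS is the intersection of the (finitely many) prime ideals of S lying over P; in particular PS is a radical ideal. -/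
/-!
Over an Artinian ring every prime `P` is maximal, so the primes of `S` over `P` are exactly the
primes containing `PS`, and their intersection is the radical of `PS`. The fibre `S ⧸ PS` is
unramified of finite type over the field `R ⧸ P`, hence reduced, so `PS` is radical. Finiteness
of the fibre holds because unramified algebras of finite type are quasi-finite.
-/

namespace Ideal

variable {R S : Type*} [CommRing R] [CommRing S]

theorem comap_eq_iff_map_le_of_isMaximal (f : R →+* S) {P : Ideal R} [P.IsMaximal]
    {Q : Ideal S} [Q.IsPrime] : Q.comap f = P ↔ P.map f ≤ Q := by
  refine ⟨fun h ↦ map_le_iff_le_comap.mpr h.ge, fun h ↦ ?_⟩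
  exact (IsMaximal.eq_of_le ‹_› (comap_ne_top f IsPrime.ne_top')
    (map_le_iff_le_comap.mp h)).symm

theorem radical_map_eq_sInf_comap_eq_of_isMaximal (f : R →+* S) (P : Ideal R) [P.IsMaximal] :
    (P.map f).radical = sInf {Q : Ideal S | Q.IsPrime ∧ Q.comap f = P} := by
  rw [radical_eq_sInf]
  congr 1
  ext Q
  exact ⟨fun ⟨hle, hQ⟩ ↦ ⟨hQ, (comap_eq_iff_map_le_of_isMaximal f).mpr hle⟩,
    fun ⟨hQ, hc⟩ ↦ ⟨(comap_eq_iff_map_le_of_isMaximal f).mp hc, hQ⟩⟩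

theorem setOf_isPrime_comap_eq_eq_primesOver [Algebra R S] (P : Ideal R) :
    {Q : Ideal S | Q.IsPrime ∧ Q.comap (algebraMap R S) = P} = P.primesOver S :=
  Set.ext fun Q ↦ and_congr_right fun _ ↦ ((liesOver_iff Q P).trans eq_comm).symm

end Ideal

theorem unramified_artinian_radical_fiber_general
    (R S : Type*) [CommRing R] [CommRing S] [Algebra R S] [IsArtinianRing R]
    (hft : Algebra.FiniteType R S) (hunr : Subsingleton (Ω[S⁄R]))
    (P : Ideal R) (hP : P.IsPrime) :
    {Q : Ideal S | Q.IsPrime ∧ Q.comap (algebraMap R S) = P}.Finite ∧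
    P.map (algebraMap R S) = sInf {Q : Ideal S | Q.IsPrime ∧ Q.comap (algebraMap R S) = P} ∧
    (P.map (algebraMap R S)).IsRadical := by
  have : Algebra.FormallyUnramified R S := ⟨hunr⟩
  have : P.IsMaximal := IsArtinianRing.isMaximal_of_isPrime P
  have hrad := Algebra.FormallyUnramified.isRadical_map_isMaximal R S P
  refine ⟨?_, ?_, hrad⟩
  · rw [Ideal.setOf_isPrime_comap_eq_eq_primesOver]
    exact Algebra.QuasiFinite.finite_primesOver P
  · rw [← Ideal.radical_map_eq_sInf_comap_eq_of_isMaximal, hrad.radical]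

/-- If `R` is Artinian and `R ⊆ S` is unramified, then for each prime `P` of `R`,
`PS` is the intersection of the finitely many primes of `S` over `P`; in particular
it is a radical ideal. -/
theorem unramified_artinian_radical_fiber
    (R S : Type*) [CommRing R] [CommRing S] [Algebra R S] [IsArtinianRing R]
    (hinj : Function.Injective (algebraMap R S))
    (hft : Algebra.FiniteType R S) (hunr : Subsingleton (Ω[S⁄R]))
    (P : Ideal R) (hP : P.IsPrime) :
    {Q : Ideal S | Q.IsPrime ∧ Q.comap (algebraMap R S) = P}.Finite ∧
    P.map (algebraMap R S) = sInf {Q : Ideal S | Q.IsPrime ∧ Q.comap (algebraMap R S) = P} ∧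
    (P.map (algebraMap R S)).IsRadical :=
  unramified_artinian_radical_fiber_general R S hft hunr P hP
end

section
/- Let R ⊆ S be an étale ring extension (flat, unramified, of finite presentation) with R a reduced commutative ring. Then S is reduced, and for every prime ideal P of R, the ideal PS is a radical ideal of S. -/
/-!
A reduced ring `R` embeds into the product `Q` of its residue fields, and by flatness `S` embeds
into `Q ⊗[R] S`. The ring `Q` is reduced of dimension zero, so all its localizations at primes are
fields; hence every localization of `Q ⊗[R] S` at a maximal ideal is unramified and essentially of
finite type over a field, and therefore reduced. For a prime `P`, the same applies to
`S ⧸ PS ≃ (R ⧸ P) ⊗[R] S` over the domain `R ⧸ P`.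
-/

open TensorProduct

theorem Ring.krullDimLE_zero_of_forall_exists_mul_self_mul_eq {Q : Type*} [CommRing Q]
    (h : ∀ a : Q, ∃ b, a * a * b = a) : Ring.KrullDimLE 0 Q := by
  refine .mk₀ fun P hP => Ideal.Quotient.maximal_of_isField _ ?_
  refine ⟨Ideal.Quotient.nontrivial_iff.mpr hP.ne_top |>.exists_pair_ne, mul_comm, fun {x} hx => ?_⟩
  obtain ⟨a, rfl⟩ := Ideal.Quotient.mk_surjective x
  obtain ⟨b, hb⟩ := h a
  refine ⟨Ideal.Quotient.mk P b, mul_left_cancel₀ hx ?_⟩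
  rw [← map_mul, ← map_mul, ← mul_assoc, hb, mul_one]

instance Pi.krullDimLE_zero {ι : Type*} (K : ι → Type*) [∀ i, Field (K i)] :
    Ring.KrullDimLE 0 (Π i, K i) :=
  Ring.krullDimLE_zero_of_forall_exists_mul_self_mul_eq fun a =>
    ⟨a⁻¹, funext fun i => mul_self_mul_inv (a i)⟩

theorem Localization.AtPrime.isField_of_krullDimLE_zero {Q : Type*} [CommRing Q] [IsReduced Q]
    [Ring.KrullDimLE 0 Q] (P : Ideal Q) [P.IsPrime] : IsField (Localization.AtPrime P) :=
  have : Ring.KrullDimLE 0 (Localization.AtPrime P) :=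
    .of_isLocalization P (Ideal.mem_minimalPrimes_iff_isPrime.mpr ‹_›) _
  Ring.KrullDimLE.isField_of_isReduced

theorem injective_algebraMap_pi_residueField (R : Type*) [CommRing R] [IsReduced R] :
    Function.Injective (algebraMap R (Π p : PrimeSpectrum R, p.asIdeal.ResidueField)) := by
  refine (injective_iff_map_eq_zero _).mpr fun r hr => ?_
  have hr_nil : r ∈ nilradical R := by
    rw [nilradical_eq_sInf, Submodule.mem_sInf]
    intro p (hp : Ideal.IsPrime p)
    exact Ideal.algebraMap_residueField_eq_zero.mp (congrFun hr ⟨p, hp⟩)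
  exact (mem_nilradical.mp hr_nil).eq_zero

namespace Algebra.FormallyUnramified

theorem isReduced_of_krullDimLE_zero (Q B : Type*) [CommRing Q] [IsReduced Q]
    [Ring.KrullDimLE 0 Q] [CommRing B] [Algebra Q B] [FormallyUnramified Q B]
    [EssFiniteType Q B] : IsReduced B := by
  refine isReduced_ofLocalizationMaximal _ fun n _ => ?_
  let P := n.comap (algebraMap Q B)
  let := (Localization.AtPrime.isField_of_krullDimLE_zero P).toField
  let := Localization.AtPrime.algebraOfLiesOver P n
  have : FormallyUnramified Q (Localization.AtPrime n) := .comp Q B _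
  have : EssFiniteType Q (Localization.AtPrime n) := .comp Q B _
  have : FormallyUnramified (Localization.AtPrime P) (Localization.AtPrime n) :=
    .of_restrictScalars Q _ _
  have : EssFiniteType (Localization.AtPrime P) (Localization.AtPrime n) := .of_comp Q _ _
  exact isReduced_of_field (Localization.AtPrime P) _

theorem isReduced_of_flat (R S : Type*) [CommRing R] [IsReduced R] [CommRing S] [Algebra R S]
    [Module.Flat R S] [FormallyUnramified R S] [EssFiniteType R S] : IsReduced S := by
  let Q := Π p : PrimeSpectrum R, p.asIdeal.ResidueField
  have : IsReduced (Q ⊗[R] S) := isReduced_of_krullDimLE_zero Q _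
  exact isReduced_of_injective _
    (Algebra.TensorProduct.includeRight_injective (injective_algebraMap_pi_residueField R))

end Algebra.FormallyUnramified

theorem etale_of_reduced_is_reduced_general
    (R S : Type*) [CommRing R] [CommRing S] [Algebra R S] [IsReduced R]
    [Module.Flat R S] (hfp : Algebra.FinitePresentation R S)
    (hunr : Subsingleton (Ω[S⁄R])) :
    IsReduced S ∧
      ∀ P : Ideal R, P.IsPrime → (P.map (algebraMap R S)).IsRadical := by
  have : Algebra.FormallyUnramified R S := ⟨hunr⟩
  refine ⟨Algebra.FormallyUnramified.isReduced_of_flat R S, fun P hP => ?_⟩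
  have : IsReduced ((R ⧸ P) ⊗[R] S) := Algebra.FormallyUnramified.isReduced_of_flat (R ⧸ P) _
  rw [Ideal.isRadical_iff_quotient_reduced]
  exact isReduced_of_injective _ (Algebra.TensorProduct.quotIdealMapEquivQuotTensor S P).injective

/-- If `R ⊆ S` is étale with `R` reduced, then `S` is reduced and `PS` is radical
for every prime `P` of `R`. -/
theorem etale_of_reduced_is_reduced
    (R S : Type*) [CommRing R] [CommRing S] [Algebra R S] [IsReduced R]
    (hinj : Function.Injective (algebraMap R S))
    [Module.Flat R S] (hfp : Algebra.FinitePresentation R S)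
    (hunr : Subsingleton (Ω[S⁄R])) :
    IsReduced S ∧
      ∀ P : Ideal R, P.IsPrime → (P.map (algebraMap R S)).IsRadical :=
  etale_of_reduced_is_reduced_general R S hfp hunr
end

section
/- Let R ⊆ S be an étale ring extension with R Artinian. If R ⊆ S is subintegral (i.e., integral, spectrally bijective, and all residual field extensions κ(Q∩R) → κ(Q) are isomorphisms), then R = S. -/
/-!
Being integral and of finite type, `S` is a finite `R`-module, so by Nakayama's lemma at every
maximal ideal `P` of `R` it suffices to show `S = R + P S`. As `S` is unramified over `R`, the
ideal `P S` is radical, so it is the intersection of the primes above `P`, i.e. the unique such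
prime `Q`. Finally `S = R + Q` because `R / P = κ(P) → κ(Q) = S / Q` is onto.
-/

theorem Submodule.eq_top_of_forall_isMaximal_le_sup_smul {R M : Type*} [CommRing R]
    [AddCommGroup M] [Module R M] [Module.Finite R M] {N : Submodule R M}
    (h : ∀ P : Ideal R, P.IsMaximal → ⊤ ≤ N ⊔ P • ⊤) : N = ⊤ := by
  by_contra hN
  obtain ⟨P, hP, hcolon⟩ := Ideal.exists_le_maximal (N.colon Set.univ) fun htop => hN <|
    top_le_iff.mp fun x _ => by
      simpa using (Submodule.colon_eq_top_iff_subset _).mp htop (Set.mem_univ x)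
  obtain ⟨r, hr1, hr⟩ :=
    exists_sub_one_mem_and_smul_le_of_fg_of_le_sup Module.Finite.fg_top le_rfl (h P hP)
  have hrP : r ∈ P := hcolon <| Submodule.mem_colon.mpr fun x _ =>
    hr (Submodule.smul_mem_pointwise_smul x r ⊤ trivial)
  exact hP.ne_top <| (Ideal.eq_top_iff_one _).mpr (by simpa using P.sub_mem hrP hr1)

theorem Algebra.surjective_algebraMap_of_forall_isMaximal {R S : Type*} [CommRing R]
    [CommRing S] [Algebra R S] [Module.Finite R S]
    (h : ∀ P : Ideal R, P.IsMaximal →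
      ∀ s : S, ∃ r : R, s - algebraMap R S r ∈ P.map (algebraMap R S)) :
    Function.Surjective (algebraMap R S) := by
  have hrange : LinearMap.range (Algebra.linearMap R S) = ⊤ :=
    Submodule.eq_top_of_forall_isMaximal_le_sup_smul fun P hP s _ => by
      obtain ⟨r, hr⟩ := h P hP s
      rw [Ideal.smul_top_eq_map]
      exact Submodule.mem_sup.mpr ⟨_, ⟨r, rfl⟩, _, hr, add_sub_cancel _ _⟩
  exact LinearMap.range_eq_top.mp hrange

theorem Ideal.map_comap_eq_self_of_injective_primeSpectrum_comap {R S : Type*} [CommRing R]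
    [CommRing S] [Algebra R S] [Algebra.EssFiniteType R S] [Algebra.FormallyUnramified R S]
    (hinj : Function.Injective (PrimeSpectrum.comap (algebraMap R S)))
    (Q : Ideal S) [hQ : Q.IsPrime] [hP : (Q.comap (algebraMap R S)).IsMaximal] :
    (Q.comap (algebraMap R S)).map (algebraMap R S) = Q := by
  refine le_antisymm Ideal.map_comap_le ?_
  rw [← Ideal.radical_eq_iff.mpr
      (Algebra.FormallyUnramified.isRadical_map_isMaximal R S (Q.comap (algebraMap R S))),
    Ideal.radical_eq_sInf]
  refine le_sInf fun J ⟨hQJ, hJ⟩ => ?_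
  have hJQ : J.comap (algebraMap R S) = Q.comap (algebraMap R S) :=
    (hP.eq_of_le (Ideal.comap_ne_top _ hJ.ne_top) (Ideal.map_le_iff_le_comap.mp hQJ)).symm
  exact (congrArg PrimeSpectrum.asIdeal (@hinj ⟨J, hJ⟩ ⟨Q, hQ⟩ (PrimeSpectrum.ext hJQ))).ge

theorem Ideal.exists_sub_algebraMap_mem_of_residueField_surjective {R S : Type*} [CommRing R]
    [CommRing S] [Algebra R S] (Q : Ideal S) [Q.IsPrime] [(Q.comap (algebraMap R S)).IsMaximal]
    (h : Function.Surjective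
      (Ideal.ResidueField.map (Q.comap (algebraMap R S)) Q (algebraMap R S) rfl))
    (s : S) : ∃ r : R, s - algebraMap R S r ∈ Q := by
  obtain ⟨y, hy⟩ := h (algebraMap S Q.ResidueField s)
  obtain ⟨r, rfl⟩ := (Q.comap (algebraMap R S)).algebraMap_residueField_surjective y
  rw [Ideal.ResidueField.map_algebraMap] at hy
  exact ⟨r, by rw [← Ideal.algebraMap_residueField_eq_zero, map_sub, hy, sub_self]⟩

theorem subintegral_etale_eq_general
    (R S : Type*) [CommRing R] [CommRing S] [Algebra R S]
    (hfp : Algebra.FinitePresentation R S)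
    (hunr : Subsingleton (Ω[S⁄R]))
    [Algebra.IsIntegral R S]
    (hspec : Function.Bijective (PrimeSpectrum.comap (algebraMap R S)))
    (hres : ∀ (Q : Ideal S) (hQ : Q.IsPrime),
      haveI := hQ
      haveI := Localization.isLocalHom_localRingHom (Q.comap (algebraMap R S)) Q
        (algebraMap R S) rfl
      Function.Bijective (IsLocalRing.ResidueField.map
        (Localization.localRingHom (Q.comap (algebraMap R S)) Q (algebraMap R S) rfl))) :
    Function.Surjective (algebraMap R S) := by
  have : Module.Finite R S := Algebra.IsIntegral.finite
  have : Algebra.FormallyUnramified R S := ⟨hunr⟩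
  refine Algebra.surjective_algebraMap_of_forall_isMaximal fun P hP s => ?_
  obtain ⟨⟨Q, hQ⟩, hQP⟩ := hspec.2 ⟨P, hP.isPrime⟩
  obtain rfl : Q.comap (algebraMap R S) = P := congrArg PrimeSpectrum.asIdeal hQP
  rw [Ideal.map_comap_eq_self_of_injective_primeSpectrum_comap hspec.1 Q]
  exact Ideal.exists_sub_algebraMap_mem_of_residueField_surjective Q (hres Q hQ).2 s

/-- A subintegral étale extension of an Artinian ring is trivial: `R = S`. -/
theorem subintegral_etale_eq
    (R S : Type*) [CommRing R] [CommRing S] [Algebra R S] [IsArtinianRing R]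
    (hinj : Function.Injective (algebraMap R S))
    [Module.Flat R S] (hfp : Algebra.FinitePresentation R S)
    (hunr : Subsingleton (Ω[S⁄R]))
    [Algebra.IsIntegral R S]
    (hspec : Function.Bijective (PrimeSpectrum.comap (algebraMap R S)))
    (hres : ∀ (Q : Ideal S) (hQ : Q.IsPrime),
      haveI := hQ
      haveI := Localization.isLocalHom_localRingHom (Q.comap (algebraMap R S)) Q
        (algebraMap R S) rfl
      Function.Bijective (IsLocalRing.ResidueField.map
        (Localization.localRingHom (Q.comap (algebraMap R S)) Q (algebraMap R S) rfl))) :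
    Function.Surjective (algebraMap R S) :=
  subintegral_etale_eq_general R S hfp hunr hspec hres
end

section
/- Let R ⊆ S be a ring extension and suppose MSupp(S/R) := Supp_R(S/R) ∩ Max(R) is finite. If the localization R_M ⊆ S_M is module-finite for each M ∈ MSupp(S/R), then R ⊆ S is module-finite. -/
/-!
Choose, for each of the finitely many `M ∈ MSupp(S/R)`, finitely many elements of `S` whose
images span `S_M` over `R_M`, and let `T ⊆ S` be the `R`-span of these elements together
with `1`. At a maximal ideal `M` outside `MSupp(S/R)` we have `R_M = S_M`, so the copy of `R`
inside `T` already fills `S_M`. Hence `T_M = S_M` at every maximal ideal, so `T = S`.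
-/

open Submodule

namespace Submodule

section CommSemiring

variable {R M : Type*} [CommSemiring R] [AddCommMonoid M] [Module R M] (p : Submonoid R)

theorem localized_eq_top_of_le {N N' : Submodule R M} (h : N ≤ N') (hN : N.localized p = ⊤) :
    N'.localized p = ⊤ :=
  top_unique <|
    hN ▸ (localized'gi (Localization p) p (LocalizedModule.mkLinearMap p M)).gc.monotone_l h

theorem exists_finset_localized_span_eq_top
    [Module.Finite (Localization p) (LocalizedModule p M)] :
    ∃ s : Finset M, (span R (s : Set M)).localized p = ⊤ := by
  classical
  obtain ⟨t, ht⟩ := Module.Finite.fg_top (R := Localization p) (M := LocalizedModule p M)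
  choose frac hfrac using IsLocalizedModule.surj p (LocalizedModule.mkLinearMap p M)
  refine ⟨t.image (frac · |>.1), ?_⟩
  rw [eq_top_iff, ← ht, localized, localized'_span, span_le]
  intro x hx
  rw [SetLike.mem_coe, ← IsLocalization.smul_mem_iff (s := (frac x).2), hfrac]
  exact subset_span ⟨_, by simpa using ⟨x, hx, rfl⟩, rfl⟩

end CommSemiring

theorem localized_eq_top_iff_subsingleton {R M : Type*} [CommRing R] [AddCommGroup M]
    [Module R M] (p : Submonoid R) (N : Submodule R M) :
    N.localized p = ⊤ ↔ Subsingleton (LocalizedModule p (M ⧸ N)) := by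
  rw [← (localizedQuotientEquiv p N).subsingleton_congr, Quotient.subsingleton_iff]

end Submodule

theorem finite_of_locally_finite_on_msupp_general
    (R S : Type*) [CommRing R] [CommRing S] [Algebra R S]
    (hfin : {M : Ideal R | ∃ hM : M.IsMaximal,
      Nontrivial (LocalizedModule (M.primeCompl (hp := hM.isPrime))
        (S ⧸ LinearMap.range (Algebra.linearMap R S)))}.Finite)
    (hloc : ∀ (M : Ideal R) (hM : M.IsMaximal),
      Nontrivial (LocalizedModule (M.primeCompl (hp := hM.isPrime))
        (S ⧸ LinearMap.range (Algebra.linearMap R S))) →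
      Module.Finite (Localization (M.primeCompl (hp := hM.isPrime)))
        (LocalizedModule (M.primeCompl (hp := hM.isPrime)) S)) :
    Module.Finite R S := by
  choose F hF using fun M hM hnt ↦
    have := hloc M hM hnt
    exists_finset_localized_span_eq_top (M.primeCompl (hp := hM.isPrime)) (M := S)
  set Q := S ⧸ LinearMap.range (Algebra.linearMap R S)
  set MSupp := {M : Ideal R | ∃ hM : M.IsMaximal,
    Nontrivial (LocalizedModule (M.primeCompl (hp := hM.isPrime)) Q)}
  set gens : Set S := {1} ∪ ⋃ M, ⋃ h : M ∈ MSupp, ↑(F M (Exists.fst h) (Exists.snd h))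
  have hgens : gens.Finite := (Set.finite_singleton 1).union <|
    hfin.biUnion' fun M h ↦ (F M (Exists.fst h) (Exists.snd h)).finite_toSet
  suffices span R gens = ⊤ from ⟨this ▸ fg_span hgens⟩
  refine eq_top_of_localization_maximal (fun P _ ↦ Localization P.primeCompl)
    (fun P _ ↦ LocalizedModule P.primeCompl S) (fun P _ ↦ LocalizedModule.mkLinearMap _ _) _
    fun P hP ↦ ?_
  by_cases hnt : Nontrivial (LocalizedModule P.primeCompl Q)
  · exact localized_eq_top_of_le _
      (span_mono fun x hx ↦ Or.inr (Set.mem_iUnion₂.mpr ⟨P, ⟨hP, hnt⟩, hx⟩)) (hF P hP hnt)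
  · have hR : (LinearMap.range (Algebra.linearMap R S)).localized P.primeCompl = ⊤ :=
      (localized_eq_top_iff_subsingleton _ _).mpr <|
        not_nontrivial_iff_subsingleton.mp hnt
    refine localized_eq_top_of_le _ ?_ hR
    rw [← one_eq_range, one_eq_span]
    exact span_mono Set.subset_union_left

/-- If `MSupp(S/R) := Supp_R(S/R) ∩ Max(R)` is finite and `R_M ⊆ S_M` is module-finite
for each `M ∈ MSupp(S/R)`, then `R ⊆ S` is module-finite. -/
theorem finite_of_locally_finite_on_msupp
    (R S : Type*) [CommRing R] [CommRing S] [Algebra R S]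
    (hinj : Function.Injective (algebraMap R S))
    (hfin : {M : Ideal R | ∃ hM : M.IsMaximal,
      Nontrivial (LocalizedModule (M.primeCompl (hp := hM.isPrime))
        (S ⧸ LinearMap.range (Algebra.linearMap R S)))}.Finite)
    (hloc : ∀ (M : Ideal R) (hM : M.IsMaximal),
      Nontrivial (LocalizedModule (M.primeCompl (hp := hM.isPrime))
        (S ⧸ LinearMap.range (Algebra.linearMap R S))) →
      Module.Finite (Localization (M.primeCompl (hp := hM.isPrime)))
        (LocalizedModule (M.primeCompl (hp := hM.isPrime)) S)) :
    Module.Finite R S :=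
  finite_of_locally_finite_on_msupp_general R S hfin hloc
end

section
/- Let R ⊂ S be a module-finite flat ring extension of commutative rings. Then for each prime ideal P in Supp_R(S/R), the conductor satisfies (R:S)_P = 0, i.e., the conductor localizes to zero at every prime of the support. -/
/-! After localizing at `P`, `A = R_P` is local and `B = S_P` is finite and flat, hence free and
faithfully flat over `A`. For `x = r/1` and `b ∈ B` we have `x b = t ∈ xB ∩ A = xA`, say
`t = x s`, so `x (b - s) = 0` and flatness puts `b - s` in `Ann(x) B`. Thus
`B/A = Ann(x) (B/A)`, and since `B/A` is finite and nonzero, Nakayama forces `Ann(x) = A`,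
i.e. `x = 0`. -/

theorem Module.Flat.mem_annihilator_smul_top_of_smul_eq_zero {A M : Type*} [CommRing A]
    [AddCommGroup M] [Module A M] [Module.Flat A M] {x : A} {m : M} (h : x • m = 0) :
    m ∈ (Ideal.span {x}).annihilator • (⊤ : Submodule A M) := by
  obtain ⟨k, c, y, hm, hc⟩ := Module.Flat.isTrivialRelation_of_sum_smul_eq_zero
    (f := fun _ : Unit ↦ x) (x := fun _ ↦ m) (by simpa using h)
  rw [show m = _ from hm ()]
  refine Submodule.sum_mem _ fun j _ ↦ Submodule.smul_mem_smul ?_ Submodule.mem_top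
  simpa [Submodule.mem_annihilator_span_singleton, mul_comm] using hc j

theorem IsLocalRing.eq_top_of_le_smul_top {A M : Type*} [CommRing A] [IsLocalRing A]
    [AddCommGroup M] [Module A M] [Module.Finite A M] [Nontrivial M] {I : Ideal A}
    (h : (⊤ : Submodule A M) ≤ I • ⊤) : I = ⊤ := by
  by_contra hI
  exact Submodule.top_ne_ideal_smul_of_le_jacobson_annihilator
    ((IsLocalRing.le_maximalIdeal hI).trans (IsLocalRing.maximalIdeal_le_jacobson _))
    (le_antisymm h le_top)

theorem quotient_range_linearMap_mk_one (R S : Type*) [CommRing R] [Ring S] [Algebra R S] :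
    (Submodule.Quotient.mk 1 : S ⧸ LinearMap.range (Algebra.linearMap R S)) = 0 :=
  (Submodule.Quotient.mk_eq_zero _).mpr ⟨1, (algebraMap R S).map_one⟩

theorem IsLocalRing.eq_zero_of_forall_mul_mem_range_of_flat {A B : Type*} [CommRing A]
    [IsLocalRing A] [CommRing B] [Algebra A B] [Module.Flat A B] [Module.Finite A B]
    (hQ : Nontrivial (B ⧸ LinearMap.range (Algebra.linearMap A B))) {x : A}
    (hx : ∀ b : B, algebraMap A B x * b ∈ (algebraMap A B).range) : x = 0 := by
  set N := LinearMap.range (Algebra.linearMap A B)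
  have : Nontrivial B := N.mkQ_surjective.nontrivial
  have : Module.Free A B := Module.free_of_flat_of_isLocalRing (R := A)
  set I := (Ideal.span {x}).annihilator
  have hdecomp : ∀ b : B, ∃ s : A, b - s • 1 ∈ I • (⊤ : Submodule A B) := by
    intro b
    obtain ⟨t, ht⟩ := hx b
    have ht' : t ∈ Ideal.span {x} := by
      rw [← Ideal.comap_map_eq_self_of_faithfullyFlat (B := B) (Ideal.span {x}), Ideal.mem_comap,
        Ideal.map_span, Set.image_singleton, ht]
      exact Ideal.mul_mem_right _ _ (Ideal.mem_span_singleton_self _)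
    obtain ⟨s, rfl⟩ := Ideal.mem_span_singleton'.mp ht'
    refine ⟨s, Module.Flat.mem_annihilator_smul_top_of_smul_eq_zero ?_⟩
    rw [smul_sub, smul_smul, Algebra.smul_def, Algebra.smul_def, mul_one, ← ht, mul_comm s,
      sub_self]
  have hI : I = ⊤ := by
    refine IsLocalRing.eq_top_of_le_smul_top (M := B ⧸ N) fun q _ ↦ ?_
    obtain ⟨b, rfl⟩ := N.mkQ_surjective q
    obtain ⟨s, hs⟩ := hdecomp b
    rw [show N.mkQ b = N.mkQ (b - s • 1) by
      rw [map_sub, map_smul, N.mkQ_apply 1, quotient_range_linearMap_mk_one, smul_zero, sub_zero]]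
    have := Submodule.mem_map_of_mem (f := N.mkQ) hs
    rw [Submodule.map_smul''] at this
    exact Submodule.smul_mono le_rfl le_top this
  simpa [I, Submodule.mem_annihilator_span_singleton] using (Ideal.eq_top_iff_one _).mp hI

open Algebra in
theorem algebraMap_mul_mem_range_localization {R S : Type*} [CommRing R] [CommRing S]
    [Algebra R S] (M : Submonoid R) {r : R}
    (hr : ∀ s : S, algebraMap R S r * s ∈ (algebraMap R S).range)
    (b : Localization (algebraMapSubmonoid S M)) :
    algebraMap (Localization M) _ (algebraMap R (Localization M) r) * b ∈
      (algebraMap (Localization M) (Localization (algebraMapSubmonoid S M))).range := by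
  obtain ⟨⟨s, ⟨_, w, hw, rfl⟩⟩, rfl⟩ :=
    IsLocalization.mk'_surjective (algebraMapSubmonoid S M) b
  obtain ⟨a, ha⟩ := hr s
  refine ⟨IsLocalization.mk' (Localization M) a ⟨w, hw⟩, ?_⟩
  rw [← IsScalarTower.algebraMap_apply, IsScalarTower.algebraMap_apply R S,
    IsLocalization.mul_mk'_eq_mk'_of_mul, ← ha, localizationAlgebraMap_def,
    IsLocalization.map_mk']

open Algebra in
theorem nontrivial_quotient_range_of_nontrivial_localizedModule {R S : Type*} [CommRing R]
    [CommRing S] [Algebra R S] (M : Submonoid R)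
    (h : Nontrivial (LocalizedModule M (S ⧸ LinearMap.range (Algebra.linearMap R S)))) :
    Nontrivial (Localization (algebraMapSubmonoid S M) ⧸
      LinearMap.range
        (Algebra.linearMap (Localization M) (Localization (algebraMapSubmonoid S M)))) := by
  set B := Localization (algebraMapSubmonoid S M)
  set N := LinearMap.range (Algebra.linearMap R S)
  set fB := (IsScalarTower.toAlgHom R S B).toLinearMap
  set fQ := LocalizedModule.mkLinearMap M (S ⧸ N)
  set π := LinearMap.extendScalarsOfIsLocalization M (Localization M)
    (IsLocalizedModule.map M fB fQ N.mkQ)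
  have hπ : Function.Surjective π := IsLocalizedModule.map_surjective _ _ _ _ N.mkQ_surjective
  have hπ1 : π 1 = 0 := by
    simpa [π, fB, fQ, quotient_range_linearMap_mk_one] using
      IsLocalizedModule.map_apply M fB fQ N.mkQ 1
  have hker : LinearMap.range (Algebra.linearMap (Localization M) B) ≤ LinearMap.ker π := by
    rintro _ ⟨a, rfl⟩
    rw [LinearMap.mem_ker, Algebra.linearMap_apply, algebraMap_eq_smul_one, map_smul, hπ1,
      smul_zero]
  have hlift : Function.Surjective (Submodule.liftQ _ π hker) := fun q ↦
    let ⟨b, hb⟩ := hπ q; ⟨Submodule.Quotient.mk b, hb⟩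
  exact hlift.nontrivial

theorem conductor_localizes_to_zero_general
    (R S : Type*) [CommRing R] [CommRing S] [Algebra R S]
    [Module.Flat R S] [Module.Finite R S]
    (P : Ideal R) [P.IsPrime]
    (hP : Nontrivial (LocalizedModule P.primeCompl
      (S ⧸ LinearMap.range (Algebra.linearMap R S))))
    (r : R) (hr : ∀ s : S, algebraMap R S r * s ∈ (algebraMap R S).range) :
    algebraMap R (Localization.AtPrime P) r = 0 :=
  IsLocalRing.eq_zero_of_forall_mul_mem_range_of_flat
    (nontrivial_quotient_range_of_nontrivial_localizedModule P.primeCompl hP)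
    (algebraMap_mul_mem_range_localization P.primeCompl hr)

/-- For a module-finite flat extension `R ⊂ S`, the conductor localizes to zero at every
prime of the support of `S/R`. -/
theorem conductor_localizes_to_zero
    (R S : Type*) [CommRing R] [CommRing S] [Algebra R S]
    (hinj : Function.Injective (algebraMap R S))
    [Module.Flat R S] [Module.Finite R S]
    (P : Ideal R) [P.IsPrime]
    (hP : Nontrivial (LocalizedModule P.primeCompl
      (S ⧸ LinearMap.range (Algebra.linearMap R S))))
    (r : R) (hr : ∀ s : S, algebraMap R S r * s ∈ (algebraMap R S).range) :
    algebraMap R (Localization.AtPrime P) r = 0 :=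
  conductor_localizes_to_zero_general R S P hP r hr
end

section
/- Let K be a field and K ⊆ A a finite-dimensional étale K-algebra (i.e., A is a finite product of finite separable field extensions of K). Then the set [K,A] of intermediate K-subalgebras of A is finite and A has only finitely many ideals. -/
/-!
An étale `K`-algebra is a finite product `∏ Lᵢ` of finite separable field extensions, so its
ideals are products of ideals of the fields `Lᵢ`.

For subalgebras fix an algebraically closed `Ω ⊇ K`. Counting embeddings of the `Lᵢ`, `A` has
`[A : K]` embeddings into `Ω`, which by Dedekind's independence of characters form an `Ω`-basis
of `Hom_K(A, Ω)`. Restricted to a subalgebra `B` they span `Hom_K(B, Ω)`: hence every `B → Ω`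
extends to `A`, and `B` has at least `[B : K]` embeddings. Let `V` be the common equalizer of all
pairs `φ, ψ : A → Ω` agreeing on `B`. Two embeddings of `V` agreeing on `B` extend to such a pair,
so they coincide, and `[V : K] ≤ #Hom(V, Ω) ≤ #Hom(B, Ω) ≤ [B : K]` forces `V = B`. Thus `B` is
determined by a subset of the finite set `Hom(A, Ω)²`.
-/

universe u

open Module

attribute [local instance] Algebra.FormallyUnramified.finite_of_free

theorem AlgHom.injective_sigma_comp_evalAlgHom {R ι : Type*} [CommSemiring R] (L : ι → Type*)
    [∀ i, Semiring (L i)] [∀ i, Algebra R (L i)] {B : Type*} [Semiring B] [Nontrivial B]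
    [Algebra R B] :
    Function.Injective fun f : Σ i, L i →ₐ[R] B => f.2.comp (Pi.evalAlgHom R L f.1) := by
  classical
  rintro ⟨i, f⟩ ⟨j, g⟩ h
  obtain rfl : i = j := by
    by_contra hij
    simpa [Pi.single_eq_of_ne (Ne.symm hij)] using AlgHom.congr_fun h (Pi.single i 1)
  congr
  ext x
  simpa using AlgHom.congr_fun h (Pi.single i x)

namespace Algebra.Etale

section

variable {K Ω : Type*} [Field K] [Field Ω] [Algebra K Ω] [IsAlgClosed Ω]
  {A : Type u} [CommRing A] [Algebra K A] [Algebra.Etale K A]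

variable (Ω) in
theorem finrank_le_card_algHom : finrank K A ≤ Nat.card (A →ₐ[K] Ω) := by
  obtain ⟨I, _, L, _, _, e, hL⟩ := Algebra.Etale.iff_exists_algEquiv_prod K A |>.mp ‹_›
  have := Fintype.ofFinite I
  have (i : I) := (hL i).1
  have (i : I) := (hL i).2
  calc finrank K A = ∑ i, finrank K (L i) := e.toLinearEquiv.finrank_eq.trans (finrank_pi_fintype K)
    _ = Nat.card (Σ i, L i →ₐ[K] Ω) := by simp [AlgHom.card]
    _ ≤ Nat.card ((∀ i, L i) →ₐ[K] Ω) :=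
      Nat.card_le_card_of_injective _ (AlgHom.injective_sigma_comp_evalAlgHom L)
    _ = Nat.card (A →ₐ[K] Ω) := Nat.card_congr (e.arrowCongr AlgEquiv.refl).symm

theorem span_range_toLinearMap_algHom_eq_top :
    Submodule.span Ω (Set.range (AlgHom.toLinearMap : (A →ₐ[K] Ω) → A →ₗ[K] Ω)) = ⊤ := by
  have := Fintype.ofFinite (A →ₐ[K] Ω)
  refine (linearIndependent_algHom_toLinearMap K A Ω).span_eq_top_of_card_eq_finrank' ?_
  rw [finrank_linearMap_self, ← Nat.card_eq_fintype_card]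
  exact le_antisymm (card_algHom_le_finrank K A Ω) (finrank_le_card_algHom Ω)

theorem span_range_restrict_eq_top (C : Subalgebra K A) :
    Submodule.span Ω (Set.range fun φ : A →ₐ[K] Ω => (φ.comp C.val).toLinearMap) = ⊤ := by
  obtain ⟨g, hg⟩ := C.val.toLinearMap.exists_leftInverse_of_injective
    (LinearMap.ker_eq_bot.mpr Subtype.val_injective)
  let ρ := LinearMap.lcomp Ω Ω C.val.toLinearMap
  have hρ : Function.Surjective ρ := fun f => ⟨f ∘ₗ g, by
    rw [LinearMap.lcomp_apply', LinearMap.comp_assoc, hg, LinearMap.comp_id]⟩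
  rw [← LinearMap.range_eq_top.mpr hρ, ← Submodule.map_top,
    ← span_range_toLinearMap_algHom_eq_top, Submodule.map_span, ← Set.range_comp]
  rfl

theorem exists_algHom_comp_val_eq (C : Subalgebra K A) (χ : C →ₐ[K] Ω) :
    ∃ φ : A →ₐ[K] Ω, φ.comp C.val = χ := by
  by_contra! h
  have hχ : χ ∉ Set.range fun φ : A →ₐ[K] Ω => φ.comp C.val := by
    rintro ⟨φ, hφ⟩
    exact h φ hφ
  apply (linearIndependent_algHom_toLinearMap K C Ω).notMem_span_image hχ
  rw [← Set.range_comp]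
  exact (span_range_restrict_eq_top (Ω := Ω) C).symm ▸ Submodule.mem_top

theorem finrank_subalgebra_le_card_algHom (C : Subalgebra K A) :
    finrank K C ≤ Nat.card (C →ₐ[K] Ω) := by
  have := Fintype.ofFinite (C →ₐ[K] Ω)
  have hspan : Submodule.span Ω (Set.range (AlgHom.toLinearMap : (C →ₐ[K] Ω) → C →ₗ[K] Ω)) = ⊤ :=
    top_le_iff.mp <| span_range_restrict_eq_top (Ω := Ω) C ▸
      Submodule.span_mono (Set.range_subset_iff.mpr fun φ => ⟨φ.comp C.val, rfl⟩)
  calc finrank K C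
        = Set.finrank Ω (Set.range (AlgHom.toLinearMap : (C →ₐ[K] Ω) → C →ₗ[K] Ω)) := by
        rw [Set.finrank, hspan, finrank_top, finrank_linearMap_self]
    _ ≤ Nat.card (C →ₐ[K] Ω) := (finrank_range_le_card _).trans_eq Nat.card_eq_fintype_card.symm

variable (Ω) in
theorem _root_.Subalgebra.eq_iInf_equalizer (B : Subalgebra K A) :
    B = ⨅ p ∈ {p : (A →ₐ[K] Ω) × (A →ₐ[K] Ω) | p.1.comp B.val = p.2.comp B.val},
      AlgHom.equalizer p.1 p.2 := by
  set V := ⨅ p ∈ {p : (A →ₐ[K] Ω) × (A →ₐ[K] Ω) | p.1.comp B.val = p.2.comp B.val},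
      AlgHom.equalizer p.1 p.2
  have hBV : B ≤ V := le_iInf₂ fun p hp x hx => AlgHom.congr_fun hp ⟨x, hx⟩
  have hinj : Function.Injective fun χ : V →ₐ[K] Ω => χ.comp (Subalgebra.inclusion hBV) := by
    intro χ₁ χ₂ h
    obtain ⟨Φ, rfl⟩ := exists_algHom_comp_val_eq V χ₁
    obtain ⟨Ψ, rfl⟩ := exists_algHom_comp_val_eq V χ₂
    have hΦΨ : Φ.comp B.val = Ψ.comp B.val := AlgHom.ext fun x => AlgHom.congr_fun h x
    ext ⟨x, hx⟩
    exact Algebra.mem_iInf.mp (Algebra.mem_iInf.mp hx (Φ, Ψ)) hΦΨ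
  refine Subalgebra.eq_of_le_of_finrank_le hBV ?_
  calc finrank K V ≤ Nat.card (V →ₐ[K] Ω) := finrank_subalgebra_le_card_algHom V
    _ ≤ Nat.card (B →ₐ[K] Ω) := Nat.card_le_card_of_injective _ hinj
    _ ≤ finrank K B := card_algHom_le_finrank K B Ω

variable (K A)

theorem finite_subalgebra : Finite (Subalgebra K A) := by
  refine Finite.of_injective (fun B : Subalgebra K A =>
    {p : (A →ₐ[K] AlgebraicClosure K) × (A →ₐ[K] AlgebraicClosure K) |
      p.1.comp B.val = p.2.comp B.val}) fun B₁ B₂ h => ?_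
  rw [B₁.eq_iInf_equalizer (AlgebraicClosure K), B₂.eq_iInf_equalizer (AlgebraicClosure K)]
  simp only at h
  rw [h]

end

theorem finite_ideal (K : Type*) (A : Type u) [Field K] [CommRing A] [Algebra K A]
    [Algebra.Etale K A] : Finite (Ideal A) := by
  obtain ⟨I, _, L, _, _, e, -⟩ := Algebra.Etale.iff_exists_algEquiv_prod K A |>.mp ‹_›
  exact .of_equiv _ (Ideal.piOrderIso.symm.toEquiv.trans e.toRingEquiv.idealComapOrderIso.toEquiv)

end Algebra.Etale

theorem etale_over_field_fip_and_fmir_general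
    (K A : Type u) [Field K] [CommRing A] [Algebra K A]
    [Algebra.Etale K A] :
    Finite (Subalgebra K A) ∧ Finite (Ideal A) :=
  ⟨Algebra.Etale.finite_subalgebra K A, Algebra.Etale.finite_ideal K A⟩

/-- A finite-dimensional étale algebra over a field has finitely many intermediate
`K`-subalgebras and finitely many ideals. -/
theorem etale_over_field_fip_and_fmir
    (K A : Type u) [Field K] [CommRing A] [Algebra K A]
    [FiniteDimensional K A] [Algebra.Etale K A] :
    Finite (Subalgebra K A) ∧ Finite (Ideal A) :=
  etale_over_field_fip_and_fmir_general K A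
end

section
/- Let R ⊆ S be a module-finite, zero-dimensional (both R and S zero-dimensional) ring extension with conductor (R:S) = 0 and R local with maximal ideal M. Then R ⊆ S is seminormal if and only if S is reduced, and in that case R is a field and S is isomorphic to a finite product of fields. -/
/-!
If `b² = 0` then `b` and every multiple `b * s` have square and cube `0 ∈ R`, so seminormality
puts `b` in the conductor, which is `0`; hence `S` has no nonzero square-zero elements, i.e. it is
reduced. Conversely, a reduced `S` makes the zero-dimensional local ring `R ⊆ S` reduced, hence a
field, and then `b = b³ / b²` whenever `b² ≠ 0`. Finally `S` is finite over a field, so it is a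
reduced artinian ring, i.e. a finite product of fields.
-/

def IsSeminormalExtension (R S : Type*) [CommRing R] [CommRing S] [Algebra R S] : Prop :=
  ∀ b : S, b ^ 2 ∈ (algebraMap R S).range → b ^ 3 ∈ (algebraMap R S).range →
    b ∈ (algebraMap R S).range

section Seminormal

variable {R S : Type*} [CommRing R] [CommRing S] [Algebra R S]

theorem IsSeminormalExtension.eq_zero_of_sq_eq_zero (hsn : IsSeminormalExtension R S)
    (hcond : ∀ r : R, (∀ s : S, algebraMap R S r * s ∈ (algebraMap R S).range) → r = 0)
    {b : S} (hb : b ^ 2 = 0) : b = 0 := by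
  have cube_eq_zero : ∀ x : S, x ^ 2 = 0 → x ^ 3 = 0 := fun x hx => by
    rw [pow_succ, hx, zero_mul]
  have mem_range : ∀ s : S, b * s ∈ (algebraMap R S).range := fun s => by
    have hbs : (b * s) ^ 2 = 0 := by rw [mul_pow, hb, zero_mul]
    exact hsn _ ⟨0, by rw [map_zero, hbs]⟩ ⟨0, by rw [map_zero, cube_eq_zero _ hbs]⟩
  obtain ⟨r, rfl⟩ := hsn b ⟨0, by rw [map_zero, hb]⟩ ⟨0, by rw [map_zero, cube_eq_zero _ hb]⟩
  rw [hcond r mem_range, map_zero]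

theorem IsSeminormalExtension.isReduced (hsn : IsSeminormalExtension R S)
    (hcond : ∀ r : R, (∀ s : S, algebraMap R S r * s ∈ (algebraMap R S).range) → r = 0) :
    IsReduced S :=
  (isReduced_iff_pow_one_lt 2 one_lt_two).2 fun _ => hsn.eq_zero_of_sq_eq_zero hcond

theorem isSeminormalExtension_of_isField [IsReduced S] (hR : IsField R) :
    IsSeminormalExtension R S := by
  rintro b ⟨r, hr⟩ ⟨t, ht⟩
  by_cases hr0 : r = 0
  · have hb : b = 0 := IsNilpotent.eq_zero ⟨2, by rw [← hr, hr0, map_zero]⟩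
    exact ⟨0, by rw [map_zero, hb]⟩
  · obtain ⟨u, hu⟩ := hR.mul_inv_cancel hr0
    refine ⟨t * u, ?_⟩
    calc algebraMap R S (t * u) = b * (b ^ 2 * algebraMap R S u) := by rw [map_mul, ht]; ring
      _ = b := by rw [← hr, ← map_mul, hu, map_one, mul_one]

end Seminormal

theorem IsArtinianRing.exists_ringEquiv_pi_field (S : Type u) [CommRing S] [IsArtinianRing S]
    [IsReduced S] :
    ∃ (n : ℕ) (K : Fin n → Type u) (_ : ∀ i, Field (K i)), Nonempty (S ≃+* ∀ i, K i) := by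
  let e := Finite.equivFin (MaximalSpectrum S)
  refine ⟨_, fun i => S ⧸ (e.symm i).asIdeal,
    fun i => Ideal.Quotient.field (e.symm i).asIdeal, ⟨?_⟩⟩
  exact (equivPi S).toRingEquiv.trans (RingEquiv.piCongrLeft' _ e)

theorem seminormal_iff_reduced_zero_conductor_general
    (R : Type u) (S : Type v) [CommRing R] [CommRing S] [IsLocalRing R] [Algebra R S]
    (hinj : Function.Injective (algebraMap R S))
    [Module.Finite R S]
    (hdimR : ∀ P : Ideal R, P.IsPrime → P.IsMaximal)
    (hcond : ∀ r : R, (∀ s : S, algebraMap R S r * s ∈ (algebraMap R S).range) → r = 0) :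
    ((∀ b : S, b ^ 2 ∈ (algebraMap R S).range → b ^ 3 ∈ (algebraMap R S).range →
        b ∈ (algebraMap R S).range) ↔ IsReduced S) ∧
      (IsReduced S → IsField R ∧ ∃ (n : ℕ) (K : Fin n → Type v) (_ : ∀ i, Field (K i)),
        Nonempty (S ≃+* ∀ i, K i)) := by
  have : Ring.KrullDimLE 0 R := .mk₀ hdimR
  have isField_R : IsReduced S → IsField R := fun _ =>
    have : IsReduced R := isReduced_of_injective _ hinj
    Ring.KrullDimLE.isField_of_isReduced
  refine ⟨⟨fun hsn => IsSeminormalExtension.isReduced hsn hcond,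
      fun hred => isSeminormalExtension_of_isField (isField_R hred)⟩,
    fun hred => ⟨isField_R hred, ?_⟩⟩
  let := (isField_R hred).toField
  have : IsArtinianRing S := IsArtinianRing.of_finite R S
  exact IsArtinianRing.exists_ringEquiv_pi_field S

/-- A module-finite zero-dimensional extension with zero conductor and `R` local is
seminormal iff `S` is reduced; in that case `R` is a field and `S` a finite product
of fields. -/
theorem seminormal_iff_reduced_zero_conductor
    (R : Type u) (S : Type v) [CommRing R] [CommRing S] [IsLocalRing R] [Algebra R S]
    (hinj : Function.Injective (algebraMap R S))
    [Module.Finite R S]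
    (hdimR : ∀ P : Ideal R, P.IsPrime → P.IsMaximal)
    (hdimS : ∀ Q : Ideal S, Q.IsPrime → Q.IsMaximal)
    (hcond : ∀ r : R, (∀ s : S, algebraMap R S r * s ∈ (algebraMap R S).range) → r = 0) :
    ((∀ b : S, b ^ 2 ∈ (algebraMap R S).range → b ^ 3 ∈ (algebraMap R S).range →
        b ∈ (algebraMap R S).range) ↔ IsReduced S) ∧
      (IsReduced S → IsField R ∧ ∃ (n : ℕ) (K : Fin n → Type v) (_ : ∀ i, Field (K i)),
        Nonempty (S ≃+* ∀ i, K i)) :=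
  seminormal_iff_reduced_zero_conductor_general R S hinj hdimR hcond
end

section
/- Let R → S be a module-finite ring homomorphism where R is Artinian and reduced, S is reduced, and all residue field extensions κ(Q ∩ R) → κ(Q) (for Q ∈ Spec(S)) are finite separable. Then R → S is étale (flat, of finite presentation, with Ω_{S/R} = 0). -/
/-!
Over the semisimple ring `R` every module is flat, and `R` is noetherian, so `S` is flat and
finitely presented. `S` is artinian (finite over `R`) and reduced, so each localization `S_Q` is
a field; hence `P S_Q = Q S_Q = 0`, and together with separability of `κ(Q)/κ(P)` this says that
`S` is unramified at every prime, i.e. `Ω[S⁄R] = 0`.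
-/

theorem IsLocalRing.ResidueField.map_algebraMap_toAlgebra {R S : Type*} [CommRing R]
    [CommRing S] [IsLocalRing R] [IsLocalRing S] [Algebra R S] [IsLocalHom (algebraMap R S)] :
    (ResidueField.map (algebraMap R S)).toAlgebra =
      inferInstanceAs (Algebra (ResidueField R) (ResidueField S)) :=
  Algebra.algebra_ext _ _ fun x ↦ by
    obtain ⟨x, rfl⟩ := residue_surjective x
    rfl

namespace Algebra

open Localization.AtPrime

theorem isUnramifiedAt_of_isField_localization (R : Type*) {S : Type*} [CommRing R]
    [CommRing S] [Algebra R S] [EssFiniteType R S] (p : Ideal R) [p.IsPrime]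
    (q : Ideal S) [q.IsPrime] [q.LiesOver p]
    [Algebra (Localization.AtPrime p) (Localization.AtPrime q)] [IsLiesOverAlgebra p q]
    [Algebra.IsSeparable p.ResidueField q.ResidueField] (hq : IsField (Localization.AtPrime q)) :
    IsUnramifiedAt R q := by
  refine (isUnramifiedAt_iff_map_eq R p q).mpr ⟨‹_›, ?_⟩
  have hbot : IsLocalRing.maximalIdeal (Localization.AtPrime q) = ⊥ :=
    IsLocalRing.isField_iff_maximalIdeal_eq.mp hq
  rw [hbot, eq_bot_iff, ← hbot, Ideal.map_le_iff_le_comap,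
    IsScalarTower.algebraMap_eq R S (Localization.AtPrime q), ← Ideal.comap_comap]
  change p ≤ ((IsLocalRing.maximalIdeal _).under S).under R
  rw [IsLocalization.AtPrime.under_maximalIdeal (Localization.AtPrime q) q, ← q.over_def p]

theorem FormallyUnramified.of_isReduced_of_isArtinianRing (R S : Type*) [CommRing R]
    [CommRing S] [Algebra R S] [EssFiniteType R S] [IsArtinianRing S] [IsReduced S]
    (hsep : ∀ Q : PrimeSpectrum S,
      letI := algebraOfLiesOver (Q.1.under R) Q.1
      Algebra.IsSeparable (Q.1.under R).ResidueField Q.1.ResidueField) :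
    FormallyUnramified R S :=
  formallyUnramified_iff_forall.mpr fun Q ↦
    letI := algebraOfLiesOver (Q.1.under R) Q.1
    haveI := hsep Q
    isUnramifiedAt_of_isField_localization R (Q.1.under R) Q.1
      (IsArtinianRing.isField_of_isReduced_of_isLocalRing _)

end Algebra

/-- A module-finite map of reduced rings with `R` Artinian reduced and finite separable
residue field extensions is étale. -/
theorem etale_of_artinian_reduced
    (R S : Type*) [CommRing R] [CommRing S] [Algebra R S]
    [IsArtinianRing R] [IsReduced R] [IsReduced S] [Module.Finite R S]
    (hres : ∀ (Q : Ideal S) (hQ : Q.IsPrime),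
      haveI := hQ
      haveI := Localization.isLocalHom_localRingHom (Q.comap (algebraMap R S)) Q
        (algebraMap R S) rfl
      letI : Algebra
          (IsLocalRing.ResidueField (Localization.AtPrime (Q.comap (algebraMap R S))))
          (IsLocalRing.ResidueField (Localization.AtPrime Q)) :=
        (IsLocalRing.ResidueField.map
          (Localization.localRingHom (Q.comap (algebraMap R S)) Q (algebraMap R S) rfl)).toAlgebra
      Module.Finite
          (IsLocalRing.ResidueField (Localization.AtPrime (Q.comap (algebraMap R S))))
          (IsLocalRing.ResidueField (Localization.AtPrime Q)) ∧
        Algebra.IsSeparable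
          (IsLocalRing.ResidueField (Localization.AtPrime (Q.comap (algebraMap R S))))
          (IsLocalRing.ResidueField (Localization.AtPrime Q))) :
    Module.Flat R S ∧ Algebra.FinitePresentation R S ∧ Subsingleton (Ω[S⁄R]) := by
  have : IsSemisimpleRing R := IsArtinianRing.isSemisimpleRing_of_isReduced R
  have : Module.Projective R S := Module.projective_of_isSemisimpleRing R S
  have : IsArtinianRing S := IsArtinianRing.of_finite R S
  have : Algebra.FormallyUnramified R S :=
    .of_isReduced_of_isArtinianRing R S fun Q ↦ by
      let := Localization.AtPrime.algebraOfLiesOver (Q.1.under R) Q.1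
      convert (hres Q.1 Q.2).2
      exact IsLocalRing.ResidueField.map_algebraMap_toAlgebra.symm
  exact ⟨inferInstance, Algebra.FinitePresentation.of_finiteType.mp inferInstance, inferInstance⟩
end
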